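/- arXiv:1801.00716 — 6 statements merged into one kernel-verified Lean document; each statement's English description precedes it below -/
import Mathlib

section
/- If a hypergraph H contains a sunflower with core C and at least k+1 petals, then a set X of size at most k is a hitting set of H if and only if X is a hitting set of the hypergraph obtained from H by removing all petals of the sunflower and adding C as a hyperedge. -/
/-- A sunflower with core `C`. -/
def IsSunflower {V : Type*} [DecidableEq V] (S : Finset (Finset V)) (C : Finset V) : Prop :=
  (∀ p ∈ S, C ⊂ p) ∧ ∀ p ∈ S, ∀ q ∈ S, p ≠ q → p ∩ q = C

/-- `X` is a hitting set of the hypergraph with edge set `E`. -/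
def HitsAll {V : Type*} [DecidableEq V] (X : Finset V) (E : Set (Finset V)) : Prop :=
  ∀ e ∈ E, (e ∩ X).Nonempty

/-- Replacing a sunflower with at least `k+1` petals by its core preserves the
size-`k` hitting sets. -/
theorem sunflower_reduction {V : Type*} [DecidableEq V] (E : Set (Finset V))
    (S : Finset (Finset V)) (C : Finset V) (k : ℕ)
    (hSE : ↑S ⊆ E) (hScard : k + 1 ≤ S.card) (hsf : IsSunflower S C)
    (X : Finset V) (hX : X.card ≤ k) :
    HitsAll X E ↔ HitsAll X ((E \ ↑S) ∪ {C}) := by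
  obtain ⟨hsub, hcore⟩ := hsf
  constructor
  · intro h e he
    rcases he with he | he
    · exact h e he.1
    · rcases he with rfl
      by_contra hC
      rw [Finset.not_nonempty_iff_eq_empty] at hC
      choose f hf using fun (p : Finset V) (hp : p ∈ S) => h p (hSE hp)
      set g : {p // p ∈ S} → V := fun p => f p.1 p.2 with hg
      have hgX : ∀ p : {p // p ∈ S}, g p ∈ X := fun p =>
        (Finset.mem_inter.mp (hf p.1 p.2)).2
      have hinj : Function.Injective g := by
        intro p q hpq
        by_contra hne
        have hp' : p.1 ≠ q.1 := fun hh => hne (Subtype.ext hh)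
        have h1 : g p ∈ p.1 := (Finset.mem_inter.mp (hf p.1 p.2)).1
        have h2 : g p ∈ q.1 := hpq ▸ (Finset.mem_inter.mp (hf q.1 q.2)).1
        have : g p ∈ e := by
          rw [← hcore p.1 p.2 q.1 q.2 hp']
          exact Finset.mem_inter.mpr ⟨h1, h2⟩
        have : g p ∈ e ∩ X := Finset.mem_inter.mpr ⟨this, hgX p⟩
        simp [hC] at this
      have hcard : S.card ≤ X.card := by
        have := Finset.card_le_card_of_injOn (s := S.attach) g (fun p _ => hgX p)
          (Function.Injective.injOn hinj)
        simpa using this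
      omega
  · intro h e he
    by_cases heS : e ∈ S
    · obtain ⟨x, hx⟩ := h C (Or.inr rfl)
      rw [Finset.mem_inter] at hx
      exact ⟨x, Finset.mem_inter.mpr ⟨(hsub e heS).1 hx.1, hx.2⟩⟩
    · exact h e (Or.inl ⟨he, heS⟩)
end

section
/- For hypergraphs A, B, C on a common vertex set, if every hitting set of A ∪ B of size at most k is also a hitting set of C, then A ∪ B and A ∪ (B ⊖ C) ∪ C have exactly the same hitting sets of size at most k, where B ⊖ C denotes the hypergraph consisting of those edges of B that contain no edge of C as a subset. -/
/-- `A ⊖ B`: the edges of `A` that contain no edge of `B` as a subset. -/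
def Ominus {V : Type*} (A B : Set (Finset V)) : Set (Finset V) :=
  {e ∈ A | ∀ e' ∈ B, ¬ e' ⊆ e}

/-- If every size-`k` hitting set of `A ∪ B` also hits `C`, then `A ∪ B` and
`A ∪ (B ⊖ C) ∪ C` have exactly the same size-`k` hitting sets. -/
theorem replace_by_cores_preserves_hitting {V : Type*} [DecidableEq V]
    (A B C : Set (Finset V)) (k : ℕ)
    (h : ∀ X : Finset V, X.card ≤ k → HitsAll X (A ∪ B) → HitsAll X C) :
    ∀ X : Finset V, X.card ≤ k →
      (HitsAll X (A ∪ B) ↔ HitsAll X (A ∪ Ominus B C ∪ C)) := by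
  intro X hk
  constructor
  · intro hX e he
    rcases he with (he | he) | he
    · exact hX e (Or.inl he)
    · exact hX e (Or.inr he.1)
    · exact h X hk hX e he
  · intro hX e he
    rcases he with he | he
    · exact hX e (Or.inl (Or.inl he))
    · by_cases hc : ∀ e' ∈ C, ¬ e' ⊆ e
      · exact hX e (Or.inl (Or.inr ⟨he, hc⟩))
      · push_neg at hc
        obtain ⟨e', he', hsub⟩ := hc
        obtain ⟨x, hx⟩ := hX e' (Or.inr he')
        rw [Finset.mem_inter] at hx
        exact ⟨x, Finset.mem_inter.mpr ⟨hsub hx.1, hx.2⟩⟩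
end

section
/- Let (M_0, …, M_d) be a matryoshka sequence for H and k, with d = d(H). Then the hypergraph K = (M_0 ⊖ M_1) ∪ … ∪ (M_{d-1} ⊖ M_d) ∪ M_d has at most ∑_{i=0}^{d} k^i · i! hyperedges. -/
/-- `X` is a hitting set of the hypergraph with edge set `E`. -/
def HitsAllF {V : Type*} [DecidableEq V] (X : Finset V) (E : Finset (Finset V)) : Prop :=
  ∀ e ∈ E, (e ∩ X).Nonempty

/-- `A ⊖ B`: the edges of `A` that contain no edge of `B` as a subset. -/
def OminusF {V : Type*} [DecidableEq V] (A B : Finset (Finset V)) : Finset (Finset V) :=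
  A.filter fun e => ∀ e' ∈ B, ¬ e' ⊆ e

/-!
Each layer `M i ⊖ M (i + 1)` is sunflower-free with parameter `k`: the core of a sunflower with
more than `k` petals in `M i` is an edge of `M (i + 1)` contained in every petal. Its edges have
size at most `d - i`, so by the Erdős–Rado sunflower lemma it has at most `k ^ (d - i) * (d - i)!`
nonempty edges. All edges of `M d` are empty, so `M d` adds at most one edge.
-/

open Finset
open scoped Nat

lemma pairwiseDisjoint_filter_card_eq_one {V : Type*} (F : Finset (Finset V)) :
    ((F.filter (·.card = 1) : Finset (Finset V)) : Set (Finset V)).PairwiseDisjoint id := by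
  intro p hp q hq hpq
  obtain ⟨a, rfl⟩ := card_eq_one.1 (mem_filter.1 hp).2
  obtain ⟨b, rfl⟩ := card_eq_one.1 (mem_filter.1 hq).2
  exact disjoint_singleton.2 fun hab => hpq (hab ▸ rfl)

lemma sum_range_reflect_add {M : Type*} [AddCommMonoid M] (f : ℕ → M) (d : ℕ) :
    ∑ i ∈ range d, f (d - i) + f 0 = ∑ i ∈ range (d + 1), f i := by
  rw [← sum_range_reflect f (d + 1), sum_range_succ]
  simp

section

variable {V : Type*} [DecidableEq V]

def SunflowerFree (k : ℕ) (F : Finset (Finset V)) : Prop :=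
  ∀ S ⊆ F, ∀ C, IsSunflower S C → S.card ≤ k

lemma IsSunflower.image_insert {S : Finset (Finset V)} {C : Finset V} {x : V}
    (hS : IsSunflower S C) (hx : ∀ p ∈ S, x ∉ p) :
    IsSunflower (S.image (insert x)) (insert x C) := by
  refine ⟨?_, ?_⟩
  · rintro _ hp'
    obtain ⟨p, hp, rfl⟩ := mem_image.1 hp'
    obtain ⟨y, hyp, hyC⟩ := exists_of_ssubset (hS.1 p hp)
    refine (ssubset_iff_of_subset (insert_subset_insert x (hS.1 p hp).subset)).2
      ⟨y, mem_insert_of_mem hyp, ?_⟩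
    rw [mem_insert, not_or]
    exact ⟨fun hyx => hx p hp (hyx ▸ hyp), hyC⟩
  · rintro _ hp' _ hq' hpq
    obtain ⟨p, hp, rfl⟩ := mem_image.1 hp'
    obtain ⟨q, hq, rfl⟩ := mem_image.1 hq'
    rw [← insert_inter_distrib, hS.2 p hp q hq (fun h => hpq (h ▸ rfl))]

lemma exists_pairwiseDisjoint_superset_forall_not_disjoint {T F : Finset (Finset V)}
    (hTF : T ⊆ F) (hT : (T : Set (Finset V)).PairwiseDisjoint id)
    (hne : ∀ e ∈ F, e.Nonempty) :
    ∃ D, T ⊆ D ∧ D ⊆ F ∧ (D : Set (Finset V)).PairwiseDisjoint id ∧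
      ∀ e ∈ F, ∃ d ∈ D, ¬Disjoint e d := by
  classical
  obtain ⟨D, hDmem, hDmax⟩ :=
    (F.powerset.filter fun D => T ⊆ D ∧ (D : Set (Finset V)).PairwiseDisjoint id).exists_maximal
      ⟨T, mem_filter.2 ⟨mem_powerset.2 hTF, Subset.rfl, hT⟩⟩
  obtain ⟨hDF, hTD, hD⟩ := mem_filter.1 hDmem
  refine ⟨D, hTD, mem_powerset.1 hDF, hD, fun e he => ?_⟩
  by_contra! hdisj
  have heD : insert e D ⊆ D := hDmax (mem_filter.2 ⟨mem_powerset.2 (insert_subset he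
    (mem_powerset.1 hDF)), hTD.trans (subset_insert _ _), by
      rw [coe_insert]; exact hD.insert fun d hd _ => hdisj d hd⟩) (subset_insert _ _)
  exact (hne e he).ne_empty ((disjoint_self_iff_empty e).1 (hdisj e (insert_subset_iff.1 heD).1))

namespace SunflowerFree

variable {k : ℕ} {F G : Finset (Finset V)}

lemma mono (hF : SunflowerFree k F) (hGF : G ⊆ F) : SunflowerFree k G :=
  fun S hS => hF S (hS.trans hGF)

lemma card_le_of_pairwiseDisjoint (hF : SunflowerFree k F) (hne : ∀ e ∈ F, e.Nonempty)
    (hdisj : (F : Set (Finset V)).PairwiseDisjoint id) : F.card ≤ k :=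
  hF F Subset.rfl ∅ ⟨fun p hp => empty_ssubset.2 (hne p hp),
    fun _ hp _ hq hpq => disjoint_iff_inter_eq_empty.1 (hdisj hp hq hpq)⟩

lemma link (hF : SunflowerFree k F) (x : V) :
    SunflowerFree k ((F.filter (x ∈ ·)).image (·.erase x)) := by
  intro S hS C hsun
  have hx : ∀ p ∈ S, x ∉ p := fun p hp => by
    obtain ⟨e, -, rfl⟩ := mem_image.1 (hS hp)
    exact notMem_erase x e
  have hinj : Set.InjOn (insert x) (S : Set (Finset V)) := fun p hp q hq h => by
    rw [← erase_insert (hx p hp), h, erase_insert (hx q hq)]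
  have hsub : S.image (insert x) ⊆ F := by
    intro _ h
    obtain ⟨p, hp, rfl⟩ := mem_image.1 h
    obtain ⟨e, he, rfl⟩ := mem_image.1 (hS hp)
    rw [mem_filter] at he
    rw [insert_erase he.2]
    exact he.1
  rw [← card_image_of_injOn hinj]
  exact hF _ hsub _ (hsun.image_insert hx)

lemma card_le_of_card_le_one (hF : SunflowerFree k F) (hne : ∀ e ∈ F, e.Nonempty)
    (hcard : ∀ e ∈ F, e.card ≤ 1) : F.card ≤ k := by
  have hsing : F.filter (·.card = 1) = F :=
    filter_true_of_mem fun e he => le_antisymm (hcard e he) (hne e he).card_pos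
  rw [← hsing]
  exact (hF.mono (filter_subset _ _)).card_le_of_pairwiseDisjoint
    (fun e he => hne e (mem_filter.1 he).1) (pairwiseDisjoint_filter_card_eq_one F)

/-- A maximal disjoint subfamily `D` has at most `k` members and every edge meets its union `A`,
so every non-singleton edge lies in the star of some `x ∈ A`. Putting all singleton edges into `D`
makes them contribute one vertex to `A` instead of `n + 1`, which is what makes the count close. -/
lemma card_le_succ_of_forall_card_star_le {n : ℕ} (hF : SunflowerFree k F)
    (hne : ∀ e ∈ F, e.Nonempty) (hcard : ∀ e ∈ F, e.card ≤ n + 1) (hn : 1 ≤ n)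
    (hstar : ∀ x, (F.filter fun e => x ∈ e ∧ e ≠ {x}).card ≤ k ^ n * n !) :
    F.card ≤ k ^ (n + 1) * (n + 1)! := by
  obtain ⟨D, hSD, hDF, hD, hhit⟩ := exists_pairwiseDisjoint_superset_forall_not_disjoint
    (filter_subset (·.card = 1) F) (pairwiseDisjoint_filter_card_eq_one F) hne
  set Sing := F.filter (·.card = 1)
  have hDk : D.card ≤ k :=
    (hF.mono hDF).card_le_of_pairwiseDisjoint (fun e he => hne e (hDF he)) hD
  set A := D.biUnion id
  have hA : A.card ≤ Sing.card * 1 + (D \ Sing).card * (n + 1) := by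
    have hsplit : A = Sing.biUnion id ∪ (D \ Sing).biUnion id := by
      rw [← union_biUnion, union_sdiff_of_subset hSD]
    rw [hsplit]
    refine (card_union_le _ _).trans (add_le_add ?_ ?_) <;>
      refine card_biUnion_le_card_mul _ _ _ fun d hd => ?_
    · exact (mem_filter.1 hd).2.le
    · exact hcard d (hDF (mem_sdiff.1 hd).1)
  have hcover : F ⊆ Sing ∪ A.biUnion fun x => F.filter fun e => x ∈ e ∧ e ≠ {x} := by
    intro e he
    by_cases he1 : e.card = 1
    · exact mem_union_left _ (mem_filter.2 ⟨he, he1⟩)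
    obtain ⟨d, hd, hed⟩ := hhit e he
    obtain ⟨x, hxe, hxd⟩ := not_disjoint_iff.1 hed
    refine mem_union_right _ (mem_biUnion.2 ⟨x, mem_biUnion.2 ⟨d, hd, hxd⟩, mem_filter.2
      ⟨he, hxe, fun h => he1 (h ▸ card_singleton x)⟩⟩)
  have hFA : F.card ≤ Sing.card + A.card * (k ^ n * n !) :=
    (card_le_card hcover).trans <| (card_union_le _ _).trans <|
      add_le_add le_rfl (card_biUnion_le_card_mul _ _ _ fun x _ => hstar x)
  have hSk : Sing.card + (D \ Sing).card ≤ k := by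
    rw [card_sdiff_of_subset hSD]; have := card_le_card hSD; omega
  set s := Sing.card
  set t := (D \ Sing).card
  set b := k ^ n * n.factorial
  have hs : s ≤ s * (n * b) := by
    rcases s.eq_zero_or_pos with hs0 | hs0
    · rw [hs0, zero_mul]
    · have hb : 0 < b := Nat.mul_pos (pow_pos (by omega) n) n.factorial_pos
      exact Nat.le_mul_of_pos_right s (Nat.mul_pos hn hb)
  calc F.card ≤ s + (s * 1 + t * (n + 1)) * b := hFA.trans (by gcongr)
    _ ≤ (s + t) * (n + 1) * b := by nlinarith
    _ ≤ k * (n + 1) * b := by gcongr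
    _ = k ^ (n + 1) * (n + 1)! := by rw [Nat.factorial_succ]; ring

/-- **Sunflower Lemma** (Erdős–Rado). -/
theorem card_le_pow_mul_factorial {n : ℕ} (hF : SunflowerFree k F) (hne : ∀ e ∈ F, e.Nonempty)
    (hcard : ∀ e ∈ F, e.card ≤ n) : F.card ≤ k ^ n * n ! := by
  induction n generalizing F with
  | zero =>
    have : F = ∅ := eq_empty_of_forall_notMem fun e he =>
      (hne e he).card_pos.ne' (Nat.le_zero.1 (hcard e he))
    simp [this]
  | succ n ih =>
    rcases n.eq_zero_or_pos with rfl | hn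
    · simpa using hF.card_le_of_card_le_one hne hcard
    refine hF.card_le_succ_of_forall_card_star_le hne hcard hn fun x => ?_
    have hx : ∀ e ∈ F.filter fun e => x ∈ e ∧ e ≠ {x}, e ∈ F ∧ x ∈ e ∧ e ≠ {x} :=
      fun e he => mem_filter.1 he
    rw [← card_image_of_injOn ((erase_injOn' x).mono fun e he => (hx e he).2.1)]
    refine ih ((hF.link x).mono (image_subset_image fun e he => ?_)) ?_ ?_
    · exact mem_filter.2 ⟨(hx e he).1, (hx e he).2.1⟩
    · simp only [mem_image]
      rintro _ ⟨e, he, rfl⟩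
      exact ((nontrivial_iff_ne_singleton (hx e he).2.1).2 (hx e he).2.2).erase_nonempty
    · simp only [mem_image]
      rintro _ ⟨e, he, rfl⟩
      rw [card_erase_of_mem (hx e he).2.1]
      have := hcard e (hx e he).1
      omega

end SunflowerFree

lemma sunflowerFree_ominusF {A B : Finset (Finset V)} {k : ℕ}
    (hcores : ∀ C : Finset V,
      (∃ S : Finset (Finset V), S ⊆ A ∧ k < S.card ∧ IsSunflower S C) → C ∈ B) :
    SunflowerFree k (OminusF A B) := by
  intro S hS C hsun
  by_contra! hk
  have hSA : S ⊆ A := hS.trans (filter_subset _ _)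
  obtain ⟨p, hp⟩ := card_pos.1 (Nat.zero_lt_of_lt hk)
  exact (mem_filter.1 (hS hp)).2 C (hcores C ⟨S, hSA, hk, hsun⟩) (hsun.1 p hp).subset

end

theorem kernel_theorem_size_general {V : Type*} [DecidableEq V]
    (M : ℕ → Finset (Finset V)) (d k : ℕ)
    (hsize : ∀ i ≤ d, ∀ e ∈ M i, e.card ≤ d - i)
    (hcores : ∀ i < d, ∀ C : Finset V,
      (∃ S : Finset (Finset V), S ⊆ M i ∧ k < S.card ∧ IsSunflower S C) → C ∈ M (i + 1)) :
    (((Finset.range d).biUnion fun i => OminusF (M i) (M (i + 1))) ∪ M d).card ≤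
      ∑ i ∈ Finset.range (d + 1), k ^ i * Nat.factorial i := by
  set K := ((range d).biUnion fun i => OminusF (M i) (M (i + 1))) ∪ M d
  have hlayer : ∀ i ∈ range d,
      ((OminusF (M i) (M (i + 1))).erase ∅).card ≤ k ^ (d - i) * (d - i)! :=
    fun i hi => SunflowerFree.card_le_pow_mul_factorial
      ((sunflowerFree_ominusF (hcores i (mem_range.1 hi))).mono (erase_subset _ _))
      (fun e he => nonempty_iff_ne_empty.2 (ne_of_mem_erase he))
      (fun e he => hsize i (mem_range.1 hi).le e (filter_subset _ _ (mem_of_mem_erase he)))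
  have hK : K.erase ∅ ⊆ (range d).biUnion fun i => (OminusF (M i) (M (i + 1))).erase ∅ := by
    intro e he
    obtain ⟨hne, he⟩ := mem_erase.1 he
    rcases mem_union.1 he with he | he
    · obtain ⟨i, hi, he⟩ := mem_biUnion.1 he
      exact mem_biUnion.2 ⟨i, hi, mem_erase.2 ⟨hne, he⟩⟩
    · simpa [hne] using hsize d le_rfl e he
  calc K.card ≤ (K.erase ∅).card + 1 := by
        have := pred_card_le_card_erase (s := K) (a := ∅); omega
    _ ≤ ∑ i ∈ range d, k ^ (d - i) * (d - i)! + k ^ 0 * 0 ! := by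
      rw [pow_zero, Nat.factorial_zero]
      exact add_le_add ((card_le_card hK).trans (card_biUnion_le.trans (sum_le_sum hlayer))) le_rfl
    _ = ∑ i ∈ range (d + 1), k ^ i * i ! := sum_range_reflect_add (fun i => k ^ i * i !) d

/-- **Kernel Theorem (size part).** For a matryoshka sequence `(M 0, …, M d)` for
`H = M 0` and `k`, the kernel `K = (M 0 ⊖ M 1) ∪ … ∪ (M (d-1) ⊖ M d) ∪ M d`
has at most `∑_{i=0}^{d} k^i · i!` hyperedges. -/
theorem kernel_theorem_size {V : Type*} [DecidableEq V]
    (M : ℕ → Finset (Finset V)) (d k : ℕ)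
    (hsize : ∀ i ≤ d, ∀ e ∈ M i, e.card ≤ d - i)
    (hcores : ∀ i < d, ∀ C : Finset V,
      (∃ S : Finset (Finset V), S ⊆ M i ∧ k < S.card ∧ IsSunflower S C) → C ∈ M (i + 1))
    (hhit : ∀ i ≤ d, ∀ X : Finset V, X.card ≤ k → HitsAllF X (M 0) → HitsAllF X (M i)) :
    (((Finset.range d).biUnion fun i => OminusF (M i) (M (i + 1))) ∪ M d).card ≤
      ∑ i ∈ Finset.range (d + 1), k ^ i * Nat.factorial i :=
  kernel_theorem_size_general M d k hsize hcores
end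

section
/- Let H be a hypergraph, H_0 = H and H_{i+1} = k-cores(H_i). Then every hitting set of H of size at most k is a hitting set of H_i for every i ≤ d(H). -/
/-- The `k`-cores of a hypergraph: cores of sunflowers with more than `k` petals. -/
def KCores {V : Type*} [DecidableEq V] (k : ℕ) (E : Set (Finset V)) : Set (Finset V) :=
  {C | ∃ S : Finset (Finset V), ↑S ⊆ E ∧ k < S.card ∧ IsSunflower S C}

/-- The iterated core hypergraphs: `H 0 = H`, `H (i+1) = k-cores (H i)`. -/
def CoreIter {V : Type*} [DecidableEq V] (k : ℕ) (E : Set (Finset V)) : ℕ → Set (Finset V)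
  | 0 => E
  | i + 1 => KCores k (CoreIter k E i)

/-! A set missing the core of a sunflower meets its petals in pairwise disjoint nonempty sets,
so it has at least as many elements as the sunflower has petals. Hence a hitting set of size
at most `k` hits every core of a sunflower with more than `k` petals, and by induction it hits
every iterated core hypergraph. -/

section

variable {V : Type*} [DecidableEq V]

theorem IsSunflower.card_le_of_disjoint_core {S : Finset (Finset V)} {C X : Finset V}
    (hS : IsSunflower S C) (hCX : Disjoint C X) (hX : HitsAll X S) : S.card ≤ X.card := by
  have hdisj : (S : Set (Finset V)).PairwiseDisjoint (· ∩ X) := by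
    intro p hp q hq hpq
    rw [Function.onFun, Finset.disjoint_iff_inter_eq_empty,
      ← Finset.inter_inter_distrib_right, hS.2 p hp q hq hpq,
      Finset.disjoint_iff_inter_eq_empty.mp hCX]
  calc S.card ≤ (S.biUnion (· ∩ X)).card := Finset.card_le_card_biUnion hdisj hX
    _ ≤ X.card :=
      Finset.card_le_card (Finset.biUnion_subset.mpr fun _ _ ↦ Finset.inter_subset_right)

theorem HitsAll.kCores {X : Finset V} {E : Set (Finset V)} {k : ℕ} (hX : X.card ≤ k)
    (hhit : HitsAll X E) : HitsAll X (KCores k E) := by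
  rintro C ⟨S, hSE, hk, hS⟩
  by_contra hCX
  have hSX : S.card ≤ X.card :=
    hS.card_le_of_disjoint_core (Finset.disjoint_iff_inter_eq_empty.mpr
      (Finset.not_nonempty_iff_eq_empty.mp hCX)) fun p hp ↦ hhit p (hSE hp)
  omega

theorem HitsAll.coreIter {X : Finset V} {E : Set (Finset V)} {k : ℕ} (hX : X.card ≤ k)
    (hhit : HitsAll X E) (i : ℕ) : HitsAll X (CoreIter k E i) := by
  induction i with
  | zero => exact hhit
  | succ i ih => exact ih.kCores hX

end

theorem coreIter_hitting_general {V : Type*} [DecidableEq V]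
    (E : Set (Finset V)) (k d : ℕ)
    (X : Finset V) (hX : X.card ≤ k) (hhit : HitsAll X E) :
    ∀ i ≤ d, HitsAll X (CoreIter k E i) :=
  fun i _ ↦ hhit.coreIter hX i

/-- Every hitting set of `H` of size at most `k` is a hitting set of every
iterated core hypergraph `H_i` for `i ≤ d(H)`. -/
theorem coreIter_hitting {V : Type*} [DecidableEq V]
    (E : Set (Finset V)) (k d : ℕ) (hd : ∀ e ∈ E, e.card ≤ d)
    (X : Finset V) (hX : X.card ≤ k) (hhit : HitsAll X E) :
    ∀ i ≤ d, HitsAll X (CoreIter k E i) :=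
  coreIter_hitting_general E k d X hX hhit
end

section
/- Let H be a hypergraph, k a number, and for i ≥ 1 let H'_i be the hypergraph whose edges are the k-pseudo-cores of level i of H (with H'_0 = H). Then every k-core of H'_L (core of a sunflower in H'_L with more than k petals) is a k-pseudo-core of level L+1 of H; that is, k-cores(H'_L) ⊆ H'_{L+1}. -/
/-- A `T^k_L`-pseudo-sunflower for the hypergraph `E` with pseudo-core `C`.
The leaves of the complete `(k+1)`-ary tree `T^k_L` of depth `L` are encoded as
the sequences `Fin L → Fin (k+1)` of child choices along the root-to-leaf path;
the first depth at which the paths to two leaves `l ≠ m` diverge is `z + 1`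
where `z` is the least index with `l z ≠ m z`. -/
def IsPseudoSunflower {V : Type*} [DecidableEq V] (E : Set (Finset V)) (k L : ℕ)
    (C : Finset V) (S : (Fin L → Fin (k + 1)) → ℕ → Finset V) : Prop :=
  (∀ l, S l 0 = C) ∧
  (∀ l, (Finset.range (L + 1)).biUnion (S l) ∈ E) ∧
  (∀ l, ∀ i j : ℕ, i < j → j ≤ L → S l i ∩ S l j = ∅) ∧
  (∀ l, ∀ i : ℕ, 1 ≤ i → i ≤ L → (S l i).Nonempty) ∧
  (∀ l m : Fin L → Fin (k + 1), ∀ z : Fin L,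
    (∀ z' : Fin L, z' < z → l z' = m z') → l z ≠ m z →
      S l (z.val + 1) ∩ S m (z.val + 1) = ∅)

/-- The `k`-pseudo-cores of level `L` of the hypergraph `E`. -/
def PseudoCores {V : Type*} [DecidableEq V] (E : Set (Finset V)) (k L : ℕ) :
    Set (Finset V) :=
  {C | ∃ S, IsPseudoSunflower E k L C S}

/-- Every `k`-core of `H'_L` (the hypergraph of level-`L` `k`-pseudo-cores of `H`,
with `H'_0 = H`) is a `k`-pseudo-core of level `L+1` of `H`:
`k-cores(H'_L) ⊆ H'_{L+1}`. (Note that `PseudoCores E k 0 = E`.) -/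
theorem kCores_pseudoCores_subset {V : Type*} [DecidableEq V]
    (E : Set (Finset V)) (k : ℕ) :
    ∀ L : ℕ, KCores k (PseudoCores E k L) ⊆ PseudoCores E k (L + 1) := by
  intro L C hC
  obtain ⟨S, hSE, hk, hcore, hpair⟩ := hC
  obtain ⟨t, htS, ht⟩ := S.exists_subset_card_eq hk
  -- pick k+1 distinct petals
  set e : Fin (k + 1) → Finset V := fun j => (t.equivFin.symm (Fin.cast ht.symm j)).val with he_def
  have heinj : Function.Injective e := by
    intro a b hab
    have h1 := Subtype.coe_injective hab
    have h2 := t.equivFin.symm.injective h1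
    exact Fin.ext (by simpa using congrArg Fin.val h2)
  have heS : ∀ j, e j ∈ S := fun j => htS (t.equivFin.symm (Fin.cast ht.symm j)).2
  have hcoree : ∀ j, C ⊂ e j := fun j => hcore (e j) (heS j)
  have hpaire : ∀ j j', j ≠ j' → e j ∩ e j' = C := fun j j' h =>
    hpair (e j) (heS j) (e j') (heS j') (fun hh => h (heinj hh))
  have hp : ∀ j, e j ∈ PseudoCores E k L := fun j => hSE (heS j)
  choose W hW using hp
  refine ⟨fun l i => match i with
    | 0 => C
    | 1 => e (l 0) \ C
    | (n+2) => W (l 0) (fun z => l z.succ) (n+1), ?_, ?_, ?_, ?_, ?_⟩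
  · intro l; rfl
  · intro l
    have hedge := (hW (l 0)).2.1 (fun z => l z.succ)
    convert hedge using 1
    have h0 := (hW (l 0)).1 (fun z => l z.succ)
    ext a
    simp only [Finset.mem_biUnion, Finset.mem_range]
    constructor
    · rintro ⟨i, hi, ha⟩
      rcases i with _ | _ | n
      · exact ⟨0, Nat.succ_pos _, by rw [h0]; exact (hcoree (l 0)).subset ha⟩
      · exact ⟨0, Nat.succ_pos _, by rw [h0]; exact (Finset.mem_sdiff.mp ha).1⟩
      · exact ⟨n + 1, by omega, ha⟩
    · rintro ⟨i, hi, ha⟩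
      rcases i with _ | n
      · rw [h0] at ha
        by_cases hc : a ∈ C
        · exact ⟨0, by omega, hc⟩
        · exact ⟨1, by omega, Finset.mem_sdiff.mpr ⟨ha, hc⟩⟩
      · exact ⟨n + 2, by omega, ha⟩
  · intro l i j hij hjL
    have h0 := (hW (l 0)).1 (fun z => l z.succ)
    have hdisj := (hW (l 0)).2.2.1 (fun z => l z.succ)
    rcases j with _ | _ | n
    · omega
    · rcases i with _ | i
      · exact Finset.inter_sdiff_self C (e (l 0))
      · omega
    · have hsub : e (l 0) ∩ W (l 0) (fun z => l z.succ) (n+1) = ∅ := by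
        rw [← h0]; exact hdisj 0 (n+1) (by omega) (by omega)
      rcases i with _ | _ | m
      · apply Finset.eq_empty_of_forall_notMem
        intro a ha
        rw [Finset.mem_inter] at ha
        have : a ∈ e (l 0) ∩ W (l 0) (fun z => l z.succ) (n+1) :=
          Finset.mem_inter.mpr ⟨(hcoree (l 0)).subset ha.1, ha.2⟩
        rw [hsub] at this; exact absurd this (Finset.notMem_empty a)
      · apply Finset.eq_empty_of_forall_notMem
        intro a ha
        rw [Finset.mem_inter] at ha
        have : a ∈ e (l 0) ∩ W (l 0) (fun z => l z.succ) (n+1) :=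
          Finset.mem_inter.mpr ⟨(Finset.mem_sdiff.mp ha.1).1, ha.2⟩
        rw [hsub] at this; exact absurd this (Finset.notMem_empty a)
      · exact hdisj (m+1) (n+1) (by omega) (by omega)
  · intro l i h1 hiL
    rcases i with _ | _ | n
    · omega
    · exact Finset.sdiff_nonempty.mpr (fun h => (hcoree (l 0)).not_subset h)
    · exact (hW (l 0)).2.2.2.1 (fun z => l z.succ) (n+1) (by omega) (by omega)
  · intro l m z hagree hne
    rcases hn : z.val with _ | n
    · -- diverge at root: different petals
      have hne0 : l 0 ≠ m 0 := by
        have hz0 : z = (0 : Fin (L+1)) := Fin.ext (by simp [hn])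
        rwa [hz0] at hne
      show (e (l 0) \ C) ∩ (e (m 0) \ C) = ∅
      apply Finset.eq_empty_of_forall_notMem
      intro a ha
      rw [Finset.mem_inter, Finset.mem_sdiff, Finset.mem_sdiff] at ha
      have : a ∈ e (l 0) ∩ e (m 0) := Finset.mem_inter.mpr ⟨ha.1.1, ha.2.1⟩
      rw [hpaire (l 0) (m 0) hne0] at this
      exact ha.1.2 this
    · have hnL : n < L := by have := z.isLt; omega
      have h0lt : (0 : Fin (L+1)) < z := by
        rw [Fin.lt_def]; simp [hn]
      have hl0 : l 0 = m 0 := hagree 0 h0lt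
      have hzsucc : (⟨n, hnL⟩ : Fin L).succ = z := Fin.ext (by simp [hn])
      have hdiv := (hW (l 0)).2.2.2.2 (fun w => l w.succ) (fun w => m w.succ) ⟨n, hnL⟩
        (fun w hw => hagree w.succ (by
          rw [Fin.lt_def] at hw ⊢; simp only [Fin.val_succ, hn]; simp at hw; omega))
        (by show l (⟨n, hnL⟩ : Fin L).succ ≠ m (⟨n, hnL⟩ : Fin L).succ
            rw [hzsucc]; exact hne)
      show W (l 0) (fun w => l w.succ) (n+1) ∩ W (m 0) (fun w => m w.succ) (n+1) = ∅
      rw [← hl0]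
      exact hdiv
end

section
/- Let H be a hypergraph, k a number, and C a k-pseudo-core of level L of H. Then every hitting set X of H with |X| ≤ k satisfies X ∩ C ≠ ∅. -/
/-!
Call a node of the tree hit by `X` if `X` meets the first parts `S(l,0) ∪ … ∪ S(l,D)` of the
edge of some leaf `l` below it. Every leaf is hit, since `X` meets every edge. If all `k + 1`
children of a node at depth `D` are hit but the node itself is not, then for each child `X`
meets the part `S(l,D+1)` of some leaf below that child; these parts are pairwise disjoint, so
`X` would have `k + 1` distinct elements. Hence the root is hit, and `S(l,0) = C`.
-/

open Finset

namespace PseudoSunflower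

variable {V : Type*} [DecidableEq V] {k L : ℕ} (S : (Fin L → Fin (k + 1)) → ℕ → Finset V)
  (X : Finset V)

/-- The pair `(D, l)` stands for the node at depth `D` on the path from the root to `l`. -/
def HitsNode (D : ℕ) (l : Fin L → Fin (k + 1)) : Prop :=
  ∃ m : Fin L → Fin (k + 1), (∀ i : Fin L, (i : ℕ) < D → m i = l i) ∧
    (X ∩ (range (D + 1)).biUnion (S m)).Nonempty

variable {S X}

theorem hitsNode_leaf {l : Fin L → Fin (k + 1)}
    (hl : ((range (L + 1)).biUnion (S l) ∩ X).Nonempty) : HitsNode S X L l :=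
  ⟨l, fun _ _ => rfl, by rwa [inter_comm]⟩

theorem HitsNode.inter_core_nonempty {C : Finset V} (hS0 : ∀ l, S l 0 = C)
    {l : Fin L → Fin (k + 1)} (h : HitsNode S X 0 l) : (X ∩ C).Nonempty := by
  obtain ⟨m, -, hm⟩ := h
  rwa [range_one, singleton_biUnion, hS0] at hm

theorem HitsNode.exists_mem_of_not_hitsNode {D : ℕ} {l : Fin L → Fin (k + 1)}
    (h : HitsNode S X (D + 1) l) (hparent : ¬HitsNode S X D l) :
    ∃ m : Fin L → Fin (k + 1), (∀ i : Fin L, (i : ℕ) < D + 1 → m i = l i) ∧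
      ∃ x ∈ X, x ∈ S m (D + 1) := by
  obtain ⟨m, hml, x, hx⟩ := h
  simp only [mem_inter, mem_biUnion, mem_range] at hx
  obtain ⟨hxX, i, hi, hxS⟩ := hx
  refine ⟨m, hml, x, hxX, ?_⟩
  obtain rfl | hiD : i = D + 1 ∨ i < D + 1 := by omega
  · exact hxS
  · refine absurd ⟨m, fun j hj => hml j (by omega), x, ?_⟩ hparent
    simp only [mem_inter, mem_biUnion, mem_range]
    exact ⟨hxX, i, hiD, hxS⟩

variable
  (hdiv : ∀ l m : Fin L → Fin (k + 1), ∀ z : Fin L,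
    (∀ z' : Fin L, z' < z → l z' = m z') → l z ≠ m z →
      S l (z.val + 1) ∩ S m (z.val + 1) = ∅)
  (hcard : X.card ≤ k)
include hdiv hcard

theorem hitsNode_of_forall_child {D : ℕ} (hD : D < L) {l : Fin L → Fin (k + 1)}
    (hchild : ∀ c, HitsNode S X (D + 1) (Function.update l ⟨D, hD⟩ c)) :
    HitsNode S X D l := by
  by_contra hparent
  have hmem (c : Fin (k + 1)) := (hchild c).exists_mem_of_not_hitsNode fun ⟨m, hml, hm⟩ =>
    hparent ⟨m, fun i hi =>
      (hml i hi).trans (Function.update_of_ne (Fin.ne_of_lt (b := ⟨D, hD⟩) hi) _ _), hm⟩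
  choose m hml x hxX hxS using hmem
  have hm_below (c : Fin (k + 1)) (i : Fin L) (hi : i < ⟨D, hD⟩) : m c i = l i :=
    (hml c i (Nat.lt_succ_of_lt hi)).trans (Function.update_of_ne (ne_of_lt hi) _ _)
  have hm_at (c : Fin (k + 1)) : m c ⟨D, hD⟩ = c :=
    (hml c _ (by simp)).trans (Function.update_self _ _ _)
  have hinj : Function.Injective x := by
    intro c c' hcc'
    by_contra hne
    have hdisj := hdiv (m c) (m c') ⟨D, hD⟩
      (fun i hi => (hm_below c i hi).trans (hm_below c' i hi).symm) (by rwa [hm_at, hm_at])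
    exact notMem_empty _ (hdisj ▸ mem_inter.2 ⟨hxS c, hcc' ▸ hxS c'⟩)
  have := card_le_card_of_injOn (s := univ) x (fun c _ => hxX c) hinj.injOn
  rw [card_univ, Fintype.card_fin] at this
  omega

theorem hitsNode_of_le (hleaf : ∀ l, HitsNode S X L l) {D : ℕ} (hD : D ≤ L)
    (l : Fin L → Fin (k + 1)) : HitsNode S X D l := by
  induction hD using Nat.decreasingInduction generalizing l with
  | self => exact hleaf l
  | of_succ D hD ih => exact hitsNode_of_forall_child hdiv hcard hD fun c => ih _

end PseudoSunflower

open PseudoSunflower in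
/-- Every hitting set of `H` of size at most `k` hits every `k`-pseudo-core of
any level `L`. -/
theorem hitting_set_hits_pseudoCore {V : Type*} [DecidableEq V]
    (E : Set (Finset V)) (k L : ℕ) (C : Finset V) (hC : C ∈ PseudoCores E k L)
    (X : Finset V) (hX : HitsAll X E) (hXcard : X.card ≤ k) :
    (X ∩ C).Nonempty := by
  obtain ⟨S, hS0, hSE, -, -, hdiv⟩ := hC
  have hleaf (l : Fin L → Fin (k + 1)) : HitsNode S X L l := hitsNode_leaf (hX _ (hSE l))
  exact (hitsNode_of_le hdiv hXcard hleaf (Nat.zero_le L) fun _ => 0).inter_core_nonempty hS0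
end
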